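/- arXiv:1606.01005 — 2 statements merged into one kernel-verified Lean document; each statement's English description precedes it below -/
import Mathlib

section
/- Under Assumptions 1 and 2, for every scalar α > 0 with α < α*, the maximal RPI set P_max^α is a C-set in ℝ^n (convex, compact, with the origin in its interior). -/
open Matrix Set Pointwise

namespace RPIScaling

/-- A C-set in `ℝ^p`: convex, compact, containing the origin in its interior. -/
def IsCSet {p : ℕ} (S : Set (Fin p → ℝ)) : Prop :=
  Convex ℝ S ∧ IsCompact S ∧ (0 : Fin p → ℝ) ∈ interior S

/-- Pontryagin difference `U ⊖ V`. -/
def pontryaginDiff {p : ℕ} (U V : Set (Fin p → ℝ)) : Set (Fin p → ℝ) :=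
  {x | ∀ v ∈ V, x + v ∈ U}

/-- Upper-left `r × r` block of `A`. -/
def blockA11 {n r : ℕ} (hrn : r ≤ n) (A : Matrix (Fin n) (Fin n) ℝ) :
    Matrix (Fin r) (Fin r) ℝ :=
  A.submatrix (Fin.castLE hrn) (Fin.castLE hrn)

/-- Upper `r × m` block of `E`. -/
def blockE1 {n m r : ℕ} (hrn : r ≤ n) (E : Matrix (Fin n) (Fin m) ℝ) :
    Matrix (Fin r) (Fin m) ℝ :=
  E.submatrix (Fin.castLE hrn) id

/-- Lower-right `(n-r) × (n-r)` block of `A`. -/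
def blockA22 {n : ℕ} (r : ℕ) (A : Matrix (Fin n) (Fin n) ℝ) :
    Matrix (Fin (n - r)) (Fin (n - r)) ℝ :=
  A.submatrix (fun i => ⟨r + i.1, by have h := i.2; omega⟩)
    (fun i => ⟨r + i.1, by have h := i.2; omega⟩)

/-- The controllability matrix `[E₁, A₁₁E₁, …, A₁₁^{r-1}E₁]` of the pair `(A₁₁, E₁)`. -/
def controllabilityMatrix {n m r : ℕ} (hrn : r ≤ n) (A : Matrix (Fin n) (Fin n) ℝ)
    (E : Matrix (Fin n) (Fin m) ℝ) : Matrix (Fin r) (Fin r × Fin m) ℝ :=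
  Matrix.of fun i p => ((blockA11 hrn A) ^ (p.1 : ℕ) * blockE1 hrn E) i p.2

/-- Assumption 1: block structure of `A` and `E`, controllability of `(A₁₁, E₁)`,
and `𝒳`, `𝒟*` are C-sets. -/
structure Assumption1 {n m r : ℕ} (hrn : r ≤ n) (A : Matrix (Fin n) (Fin n) ℝ)
    (E : Matrix (Fin n) (Fin m) ℝ) (X : Set (Fin n → ℝ)) (D : Set (Fin m → ℝ)) : Prop where
  hn : 0 < n
  hm : 0 < m
  hr : 0 < r
  lowerLeftA : ∀ i j : Fin n, r ≤ (i : ℕ) → (j : ℕ) < r → A i j = 0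
  lowerE : ∀ i : Fin n, r ≤ (i : ℕ) → ∀ j, E i j = 0
  controllable : (controllabilityMatrix hrn A E).rank = r
  hX : IsCSet X
  hD : IsCSet D

/-- All complex eigenvalues of `M` have modulus `< 1`. -/
def StrictlyStable {p : ℕ} (M : Matrix (Fin p) (Fin p) ℝ) : Prop :=
  ∀ μ ∈ spectrum ℂ (M.map (algebraMap ℝ ℂ)), ‖μ‖ < 1

/-- All complex eigenvalues of `M` have modulus `≤ 1`. -/
def Stable {p : ℕ} (M : Matrix (Fin p) (Fin p) ℝ) : Prop :=
  ∀ μ ∈ spectrum ℂ (M.map (algebraMap ℝ ℂ)), ‖μ‖ ≤ 1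

/-- Assumption 2: the eigenvalues of `A₁₁` and `A₂₂` are strictly stable. -/
def Assumption2 {n r : ℕ} (hrn : r ≤ n) (A : Matrix (Fin n) (Fin n) ℝ) : Prop :=
  StrictlyStable (blockA11 hrn A) ∧ StrictlyStable (blockA22 r A)

/-- Assumption 2': the eigenvalues of `A₂₂` are stable. -/
def Assumption2' {n : ℕ} (r : ℕ) (A : Matrix (Fin n) (Fin n) ℝ) : Prop :=
  Stable (blockA22 r A)

/-- `P` is robust positively invariant for disturbance scaling `α`. -/
def IsRPI {n m : ℕ} (A : Matrix (Fin n) (Fin n) ℝ) (E : Matrix (Fin n) (Fin m) ℝ)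
    (X : Set (Fin n → ℝ)) (D : Set (Fin m → ℝ)) (α : ℝ) (P : Set (Fin n → ℝ)) : Prop :=
  P ⊆ X ∧ ∀ x ∈ P, ∀ d ∈ α • D, A.mulVec x + E.mulVec d ∈ P

/-- The maximal RPI set: the union of all RPI sets. -/
def Pmax {n m : ℕ} (A : Matrix (Fin n) (Fin n) ℝ) (E : Matrix (Fin n) (Fin m) ℝ)
    (X : Set (Fin n → ℝ)) (D : Set (Fin m → ℝ)) (α : ℝ) : Set (Fin n → ℝ) :=
  ⋃₀ {P | IsRPI A E X D α P}

/-- The minimal RPI set: the intersection of all nonempty RPI sets together with the MRPI set. -/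
def Pmin {n m : ℕ} (A : Matrix (Fin n) (Fin n) ℝ) (E : Matrix (Fin n) (Fin m) ℝ)
    (X : Set (Fin n → ℝ)) (D : Set (Fin m → ℝ)) (α : ℝ) : Set (Fin n → ℝ) :=
  ⋂₀ ({P | IsRPI A E X D α P ∧ P.Nonempty} ∪ {Pmax A E X D α})

/-- The sequence `S_k^α`. -/
def Sseq {n m : ℕ} (A : Matrix (Fin n) (Fin n) ℝ) (E : Matrix (Fin n) (Fin m) ℝ)
    (X : Set (Fin n → ℝ)) (D : Set (Fin m → ℝ)) (α : ℝ) : ℕ → Set (Fin n → ℝ)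
  | 0 => X
  | k + 1 => A.mulVec ⁻¹' (pontryaginDiff (Sseq A E X D α k) (E.mulVec '' (α • D))) ∩ X

/-- The limit set `S_∞^α`. -/
def Sinf {n m : ℕ} (A : Matrix (Fin n) (Fin n) ℝ) (E : Matrix (Fin n) (Fin m) ℝ)
    (X : Set (Fin n → ℝ)) (D : Set (Fin m → ℝ)) (α : ℝ) : Set (Fin n → ℝ) :=
  ⋂ k : ℕ, Sseq A E X D α k

/-- The sequence `R_k^α` of reachable sets. -/
def Rseq {n m : ℕ} (A : Matrix (Fin n) (Fin n) ℝ) (E : Matrix (Fin n) (Fin m) ℝ)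
    (D : Set (Fin m → ℝ)) (α : ℝ) : ℕ → Set (Fin n → ℝ)
  | 0 => {0}
  | k + 1 => A.mulVec '' (Rseq A E D α k) + E.mulVec '' (α • D)

/-- The limit set `R_∞^α`. -/
def Rinf {n m : ℕ} (A : Matrix (Fin n) (Fin n) ℝ) (E : Matrix (Fin n) (Fin m) ℝ)
    (D : Set (Fin m → ℝ)) (α : ℝ) : Set (Fin n → ℝ) :=
  ⋃ k : ℕ, Rseq A E D α k

/-- The critical scaling factor `α*`. -/
noncomputable def alphaStar {n m : ℕ} (A : Matrix (Fin n) (Fin n) ℝ)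
    (E : Matrix (Fin n) (Fin m) ℝ) (X : Set (Fin n → ℝ)) (D : Set (Fin m → ℝ)) : ℝ :=
  sSup {α : ℝ | 0 < α ∧ Rinf A E D α ⊆ X}

/-- The sequence `Q_k^α` used to characterize the maximal controlled invariant set. -/
def Qseq {n m : ℕ} (A : Matrix (Fin n) (Fin n) ℝ) (E : Matrix (Fin n) (Fin m) ℝ)
    (X : Set (Fin n → ℝ)) (D : Set (Fin m → ℝ)) (α : ℝ) : ℕ → Set (Fin n → ℝ)
  | 0 => X
  | k + 1 => A.mulVec ⁻¹' (Qseq A E X D α k + -(E.mulVec '' (α • D))) ∩ X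

/-- `C` is controlled invariant for input-constraint scaling `α`. -/
def IsCI {n m : ℕ} (A : Matrix (Fin n) (Fin n) ℝ) (E : Matrix (Fin n) (Fin m) ℝ)
    (X : Set (Fin n → ℝ)) (D : Set (Fin m → ℝ)) (α : ℝ) (C : Set (Fin n → ℝ)) : Prop :=
  C ⊆ X ∧ ∀ x ∈ C, ∃ d ∈ α • D, A.mulVec x + E.mulVec d ∈ C

/-- The maximal controlled invariant set: the union of all CI sets. -/
def Cmax {n m : ℕ} (A : Matrix (Fin n) (Fin n) ℝ) (E : Matrix (Fin n) (Fin m) ℝ)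
    (X : Set (Fin n → ℝ)) (D : Set (Fin m → ℝ)) (α : ℝ) : Set (Fin n → ℝ) :=
  ⋃₀ {C | IsCI A E X D α C}

/-- The Minkowski sum `W = ⨁_{k=0}^{M-1} A₁₁^k E₁ 𝒟*`. -/
def Wset {n m r : ℕ} (hrn : r ≤ n) (A : Matrix (Fin n) (Fin n) ℝ)
    (E : Matrix (Fin n) (Fin m) ℝ) (D : Set (Fin m → ℝ)) (M : ℕ) : Set (Fin r → ℝ) :=
  {w | ∃ d : Fin M → Fin m → ℝ, (∀ i, d i ∈ D) ∧
    w = ∑ i : Fin M, ((blockA11 hrn A) ^ (i : ℕ) * blockE1 hrn E).mulVec (d i)}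

/-!
Convexity and compactness of `Pmax` come from its maximality: the convex hull and the closure of
an RPI set are again RPI, since `𝒳` is convex and closed and `x ↦ A x + E d` is affine and
continuous.

For the interior, pick `β ∈ (α, α*)` with `R_∞^β ⊆ 𝒳`. Reachable sets scale linearly with the
disturbance, so `R_∞^α ⊆ c 𝒳` with `c = α / β < 1`. Since `A` is block triangular, its spectrum
lies in those of `A₁₁` and `A₂₂`, so the powers of `A` are bounded (Gelfand's formula) and there
is a neighbourhood `O` of `0` with `A O ⊆ O` and `O ⊆ (1 - c) 𝒳`. Then `O + R_∞^α` is RPI, lies in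
`(1 - c) 𝒳 + c 𝒳 = 𝒳` by convexity, and contains `O`.
-/

open Filter Topology
open scoped ENNReal

theorem spectrum_fromBlocks_zero₂₁_subset {K l o : Type*} [Field K] [Fintype l] [Fintype o]
    [DecidableEq l] [DecidableEq o] (A : Matrix l l K) (B : Matrix l o K) (D : Matrix o o K) :
    spectrum K (fromBlocks A B 0 D) ⊆ spectrum K A ∪ spectrum K D := by
  intro μ hμ
  by_contra h
  simp only [mem_union, not_or, spectrum.mem_iff, not_not] at h
  apply spectrum.mem_iff.1 hμ
  have hsub : algebraMap K _ μ - fromBlocks A B 0 D =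
      fromBlocks (algebraMap K _ μ - A) (-B) 0 (algebraMap K _ μ - D) := by
    simp only [Algebra.algebraMap_eq_smul_one, ← fromBlocks_one, fromBlocks_smul, sub_eq_add_neg,
      fromBlocks_neg, fromBlocks_add, smul_zero, neg_zero, zero_add, add_zero]
  rw [hsub, isUnit_iff_isUnit_det, det_fromBlocks_zero₂₁]
  exact ((isUnit_iff_isUnit_det _).1 h.1).mul ((isUnit_iff_isUnit_det _).1 h.2)

theorem bddAbove_range_norm_pow_of_norm_spectrum_lt_one {𝔸 : Type*} [NormedRing 𝔸] [NormedAlgebra ℂ 𝔸]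
    [CompleteSpace 𝔸] {a : 𝔸} (h : ∀ z ∈ spectrum ℂ a, ‖z‖ < 1) :
    BddAbove (range fun k : ℕ => ‖a ^ k‖) := by
  rcases subsingleton_or_nontrivial 𝔸 with h𝔸 | h𝔸
  · refine ⟨0, ?_⟩
    rintro _ ⟨k, rfl⟩
    simp [Subsingleton.elim (a ^ k) 0]
  have hrad : spectralRadius ℂ a < 1 := by
    exact_mod_cast spectrum.spectralRadius_lt_of_forall_lt a (r := 1) fun z hz => by
      exact_mod_cast h z hz
  refine (isBoundedUnder_of_eventually_le (a := 1) ?_).bddAbove_range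
  -- Gelfand's formula: `‖a ^ k‖₊ ^ (1 / k) < 1` for all large `k`.
  have hGelfand := spectrum.pow_nnnorm_pow_one_div_tendsto_nhds_spectralRadius a
  filter_upwards [hGelfand.eventually_lt_const hrad, eventually_gt_atTop 0] with k hk hk0
  by_contra! hgt
  have : (1 : ℝ≥0∞) ≤ (‖a ^ k‖₊ : ℝ≥0∞) := by exact_mod_cast hgt.le
  exact hk.not_ge (ENNReal.one_le_rpow this (by positivity))

section LinftyNorm

-- `Fin p → ℝ` carries the sup norm, so matrices get the induced `ℓ∞` operator norm.
attribute [local instance] Matrix.linftyOpNormedAddCommGroup Matrix.linftyOpNormedRing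
  Matrix.linftyOpNormedAlgebra

theorem linfty_opNNNorm_map_ofReal {l o : Type*} [Fintype l] [Fintype o] (M : Matrix l o ℝ) :
    ‖M.map (algebraMap ℝ ℂ)‖₊ = ‖M‖₊ := by
  simp only [Matrix.linfty_opNNNorm_def, Matrix.map_apply, Complex.coe_algebraMap,
    Complex.nnnorm_real]

theorem StrictlyStable.bddAbove_range_norm_pow {p : ℕ} {M : Matrix (Fin p) (Fin p) ℝ}
    (hM : StrictlyStable M) : BddAbove (range fun k : ℕ => ‖M ^ k‖) := by
  convert bddAbove_range_norm_pow_of_norm_spectrum_lt_one hM using 3 with k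
  rw [← coe_nnnorm, ← coe_nnnorm, ← Matrix.map_pow, linfty_opNNNorm_map_ofReal]

theorem StrictlyStable.exists_mapsTo_nhds_zero_subset {p : ℕ} {M : Matrix (Fin p) (Fin p) ℝ}
    (hM : StrictlyStable M) {U : Set (Fin p → ℝ)} (hU : U ∈ 𝓝 0) :
    ∃ O ∈ 𝓝 (0 : Fin p → ℝ), O ⊆ U ∧ MapsTo M.mulVec O O := by
  obtain ⟨C, hC⟩ := hM.bddAbove_range_norm_pow
  obtain ⟨ε, hε, hball⟩ := Metric.mem_nhds_iff.1 hU
  have hC1 : 0 < max C 1 := by positivity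
  set V := Metric.ball (0 : Fin p → ℝ) (ε / max C 1)
  refine ⟨⋃ k : ℕ, (M ^ k).mulVec '' V, ?_, ?_, ?_⟩
  · refine mem_of_superset (Metric.ball_mem_nhds 0 (div_pos hε hC1)) fun v hv => ?_
    exact mem_iUnion.2 ⟨0, v, hv, by simp⟩
  · rintro _ ⟨_, ⟨k, rfl⟩, v, hv, rfl⟩
    apply hball
    rw [mem_ball_zero_iff] at hv ⊢
    calc ‖(M ^ k) *ᵥ v‖ ≤ ‖M ^ k‖ * ‖v‖ := Matrix.linfty_opNorm_mulVec _ _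
      _ ≤ max C 1 * ‖v‖ := by
          gcongr; exact (hC ⟨k, rfl⟩).trans (le_max_left _ _)
      _ < max C 1 * (ε / max C 1) := by gcongr
      _ = ε := by field_simp
  · rintro _ ⟨_, ⟨k, rfl⟩, v, hv, rfl⟩
    exact mem_iUnion.2 ⟨k + 1, v, hv, by rw [pow_succ', ← Matrix.mulVec_mulVec]⟩

end LinftyNorm

theorem submatrix_finSumFinEquiv_eq_fromBlocks {n r : ℕ} (hrn : r ≤ n)
    {A : Matrix (Fin n) (Fin n) ℝ} (hA : ∀ i j : Fin n, r ≤ (i : ℕ) → (j : ℕ) < r → A i j = 0) :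
    let e := finSumFinEquiv.trans (finCongr (Nat.add_sub_cancel' hrn))
    A.submatrix e e =
      fromBlocks (blockA11 hrn A) (A.submatrix e e).toBlocks₁₂ 0 (blockA22 r A) := by
  intro e
  rw [← fromBlocks_toBlocks (A.submatrix e e)]
  congr 1
  ext i j
  exact hA _ _ (by simp [e]) (by simp [e])

theorem strictlyStable_of_lowerLeft_eq_zero {n r : ℕ} (hrn : r ≤ n)
    {A : Matrix (Fin n) (Fin n) ℝ} (hA : ∀ i j : Fin n, r ≤ (i : ℕ) → (j : ℕ) < r → A i j = 0)
    (h₁₁ : StrictlyStable (blockA11 hrn A)) (h₂₂ : StrictlyStable (blockA22 r A)) :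
    StrictlyStable A := by
  set e := finSumFinEquiv.trans (finCongr (Nat.add_sub_cancel' hrn))
  have hspec : spectrum ℂ (A.map (algebraMap ℝ ℂ)) =
      spectrum ℂ ((A.submatrix e e).map (algebraMap ℝ ℂ)) :=
    (AlgEquiv.spectrum_eq (reindexAlgEquiv ℂ ℂ e.symm) _).symm
  intro μ hμ
  rw [hspec, submatrix_finSumFinEquiv_eq_fromBlocks hrn hA, fromBlocks_map,
    Matrix.map_zero _ (map_zero _)] at hμ
  exact (spectrum_fromBlocks_zero₂₁_subset _ _ _ hμ).elim (h₁₁ μ) (h₂₂ μ)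

section Invariance

variable {n m : ℕ} {A : Matrix (Fin n) (Fin n) ℝ} {E : Matrix (Fin n) (Fin m) ℝ}
  {X : Set (Fin n → ℝ)} {D : Set (Fin m → ℝ)} {α : ℝ}

theorem isRPI_Pmax : IsRPI A E X D α (Pmax A E X D α) :=
  ⟨sUnion_subset fun _ hP => hP.1, fun _ ⟨P, hP, hx⟩ d hd => ⟨P, hP, hP.2 _ hx d hd⟩⟩

theorem IsRPI.subset_Pmax {P : Set (Fin n → ℝ)} (hP : IsRPI A E X D α P) :
    P ⊆ Pmax A E X D α :=
  subset_sUnion_of_mem hP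

theorem isRPI_convexHull (hX : Convex ℝ X) {P : Set (Fin n → ℝ)} (hP : IsRPI A E X D α P) :
    IsRPI A E X D α (convexHull ℝ P) := by
  refine ⟨convexHull_min hP.1 hX, fun x hx d hd => ?_⟩
  let f : (Fin n → ℝ) →ᵃ[ℝ] (Fin n → ℝ) :=
    A.mulVecLin.toAffineMap + AffineMap.const ℝ _ (E *ᵥ d)
  have hconv : Convex ℝ (f ⁻¹' convexHull ℝ P) := (convex_convexHull ℝ P).affine_preimage f
  exact convexHull_min (fun y hy => show f y ∈ _ from subset_convexHull ℝ P (hP.2 y hy d hd))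
    hconv hx

theorem isRPI_closure (hX : IsClosed X) {P : Set (Fin n → ℝ)} (hP : IsRPI A E X D α P) :
    IsRPI A E X D α (closure P) :=
  ⟨closure_minimal hP.1 hX, fun x hx d hd =>
    (MapsTo.closure (fun y hy => hP.2 y hy d hd) (by fun_prop)) hx⟩

theorem convex_Pmax (hX : Convex ℝ X) : Convex ℝ (Pmax A E X D α) :=
  convexHull_eq_self.1 <|
    (isRPI_convexHull hX isRPI_Pmax).subset_Pmax.antisymm (subset_convexHull ℝ _)

theorem isCompact_Pmax (hX : IsCompact X) : IsCompact (Pmax A E X D α) :=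
  hX.of_isClosed_subset
    (isClosed_of_closure_subset (isRPI_closure hX.isClosed isRPI_Pmax).subset_Pmax) isRPI_Pmax.1

theorem Rseq_mul (c β : ℝ) (k : ℕ) : Rseq A E D (c * β) k = c • Rseq A E D β k := by
  induction k with
  | zero => simp [Rseq]
  | succ k ih =>
    simp only [Rseq, ih, smul_add, ← mul_smul, ← Matrix.coe_mulVecLin, image_smul_set]

theorem Rinf_mul (c β : ℝ) : Rinf A E D (c * β) = c • Rinf A E D β := by
  simp only [Rinf, Rseq_mul, smul_set_iUnion]

theorem zero_mem_Rinf : (0 : Fin n → ℝ) ∈ Rinf A E D α :=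
  mem_iUnion.2 ⟨0, rfl⟩

theorem mulVec_add_mem_Rinf {z : Fin n → ℝ} (hz : z ∈ Rinf A E D α) {d : Fin m → ℝ}
    (hd : d ∈ α • D) : A *ᵥ z + E *ᵥ d ∈ Rinf A E D α := by
  obtain ⟨k, hk⟩ := mem_iUnion.1 hz
  exact mem_iUnion.2 ⟨k + 1, add_mem_add (mem_image_of_mem _ hk) (mem_image_of_mem _ hd)⟩

theorem isRPI_add_Rinf {O : Set (Fin n → ℝ)} (hO : MapsTo A.mulVec O O)
    (hX : O + Rinf A E D α ⊆ X) : IsRPI A E X D α (O + Rinf A E D α) := by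
  refine ⟨hX, ?_⟩
  rintro _ ⟨o, ho, z, hz, rfl⟩ d hd
  rw [Matrix.mulVec_add, add_assoc]
  exact add_mem_add (hO ho) (mulVec_add_mem_Rinf hz hd)

theorem exists_Rinf_subset_smul_of_lt_alphaStar (hα : 0 ≤ α) (hlt : α < alphaStar A E X D) :
    ∃ c : ℝ, 0 ≤ c ∧ c < 1 ∧ Rinf A E D α ⊆ c • X := by
  have hne : {β : ℝ | 0 < β ∧ Rinf A E D β ⊆ X}.Nonempty := by
    by_contra! h
    rw [alphaStar, h, Real.sSup_empty] at hlt
    exact hlt.not_ge hα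
  obtain ⟨β, ⟨hβ, hβX⟩, hαβ⟩ := exists_lt_of_lt_csSup hne hlt
  refine ⟨α / β, div_nonneg hα hβ.le, (div_lt_one hβ).2 hαβ, ?_⟩
  calc Rinf A E D α = Rinf A E D (α / β * β) := by rw [div_mul_cancel₀ α hβ.ne']
    _ = (α / β) • Rinf A E D β := Rinf_mul _ _
    _ ⊆ (α / β) • X := smul_set_mono hβX

theorem zero_mem_interior_Pmax (hXconv : Convex ℝ X) (hX0 : (0 : Fin n → ℝ) ∈ interior X)
    (hA : StrictlyStable A) (hα : 0 ≤ α) (hlt : α < alphaStar A E X D) :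
    (0 : Fin n → ℝ) ∈ interior (Pmax A E X D α) := by
  obtain ⟨c, hc0, hc1, hR⟩ := exists_Rinf_subset_smul_of_lt_alphaStar hα hlt
  have hU : (1 - c) • X ∈ 𝓝 (0 : Fin n → ℝ) :=
    (set_smul_mem_nhds_zero_iff (sub_ne_zero.2 hc1.ne')).2 (mem_interior_iff_mem_nhds.1 hX0)
  obtain ⟨O, hO, hOU, hOA⟩ := hA.exists_mapsTo_nhds_zero_subset hU
  have hOR : O + Rinf A E D α ⊆ X :=
    calc O + Rinf A E D α ⊆ (1 - c) • X + c • X := add_subset_add hOU hR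
      _ = X := by rw [← hXconv.add_smul (sub_nonneg.2 hc1.le) hc0, sub_add_cancel, one_smul]
  exact mem_interior_iff_mem_nhds.2 <| mem_of_superset hO <|
    (subset_add_left O zero_mem_Rinf).trans (isRPI_add_Rinf hOA hOR).subset_Pmax

end Invariance

theorem pmax_isCSet_of_lt_alphaStar {n m r : ℕ} (hrn : r ≤ n)
    (A : Matrix (Fin n) (Fin n) ℝ) (E : Matrix (Fin n) (Fin m) ℝ)
    (X : Set (Fin n → ℝ)) (D : Set (Fin m → ℝ))
    (hA1 : Assumption1 hrn A E X D) (hA2 : Assumption2 hrn A)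
    (α : ℝ) (hα : 0 < α) (hlt : α < alphaStar A E X D) :
    IsCSet (Pmax A E X D α) := by
  obtain ⟨hXconv, hXcomp, hX0⟩ := hA1.hX
  have hA : StrictlyStable A :=
    strictlyStable_of_lowerLeft_eq_zero hrn hA1.lowerLeftA hA2.1 hA2.2
  exact ⟨convex_Pmax hXconv, isCompact_Pmax hXcomp,
    zero_mem_interior_Pmax hXconv hX0 hA hα.le hlt⟩

end RPIScaling
end

section
/- Under Assumptions 1 and 2, let η ∈ [0,1) and suppose k ∈ ℕ with k ≥ 1 is such that A^k = η · I_n (the k-th matrix power of A is η times the identity). Then α* = (1−η) · ᾱ_k, where ᾱ_k := sup{α > 0 | α • R_k^1 ⊆ 𝒳}. -/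
open Matrix Set Pointwise

/-! Since `A ^ k = η • 1`, the reachable sets at multiples of `k` are dilates of `R := R_k^1`:
`R_{tk}^α = α (1 + η + ⋯ + η^{t-1}) • R`, because `R` is convex and so `p • R + q • R = (p + q) • R`
for `p, q ≥ 0`. As `(R_j^α)` increases, these sets exhaust `R_∞^α`, and their factors increase to
`α / (1 - η)`. Since `𝒳` is closed and star-shaped about `0`, `R_∞^α ⊆ 𝒳` iff
`(α / (1 - η)) • R ⊆ 𝒳`, so the set of admissible `α` is the `(1 - η)`-dilate of the set defining
`ᾱ_k`; suprema commute with nonnegative dilation, also for the junk value `sSup = 0` of an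
unbounded set. -/

open Filter Topology

section StarConvex

variable {V : Type*} [AddCommGroup V] [Module ℝ V] {X R : Set V}

theorem StarConvex.smul_set_subset_of_le (hX : StarConvex ℝ 0 X) {a b : ℝ} (ha : 0 ≤ a)
    (hab : a ≤ b) (hb : b • R ⊆ X) : a • R ⊆ X := by
  rcases (ha.trans hab).eq_or_lt with rfl | hb_pos
  · rwa [le_antisymm hab ha]
  rintro _ ⟨x, hx, rfl⟩
  have h := hX.smul_mem (hb (smul_mem_smul_set hx)) (div_nonneg ha hb_pos.le)
    ((div_le_one hb_pos).2 hab)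
  rwa [smul_smul, div_mul_cancel₀ _ hb_pos.ne'] at h

theorem forall_smul_set_subset_iff_of_tendsto [TopologicalSpace V] [ContinuousSMul ℝ V]
    (hXc : IsClosed X) (hXs : StarConvex ℝ 0 X) {c : ℕ → ℝ} {c₀ : ℝ} (hc_nonneg : ∀ t, 0 ≤ c t)
    (hc_le : ∀ t, c t ≤ c₀) (hc : Tendsto c atTop (𝓝 c₀)) :
    (∀ t, c t • R ⊆ X) ↔ c₀ • R ⊆ X := by
  refine ⟨fun h => ?_, fun h t => hXs.smul_set_subset_of_le (hc_nonneg t) (hc_le t) h⟩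
  rintro _ ⟨x, hx, rfl⟩
  exact hXc.mem_of_tendsto (hc.smul_const x)
    (Eventually.of_forall fun t => h t (smul_mem_smul_set hx))

end StarConvex

theorem geom_sum_le_inv_one_sub {η : ℝ} (hη0 : 0 ≤ η) (hη1 : η < 1) (t : ℕ) :
    ∑ i ∈ Finset.range t, η ^ i ≤ (1 - η)⁻¹ :=
  sum_le_hasSum _ (fun i _ => pow_nonneg hη0 i) (hasSum_geometric_of_lt_one hη0 hη1)

theorem Matrix.image_mulVec_add {R ι κ : Type*} [CommSemiring R] [Fintype κ]
    (M : Matrix ι κ R) (S T : Set (κ → R)) : M.mulVec '' (S + T) = M.mulVec '' S + M.mulVec '' T :=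
  image_add M.mulVecLin

theorem Matrix.image_mulVec_smul {R ι κ : Type*} [CommSemiring R] [Fintype κ]
    (M : Matrix ι κ R) (c : R) (S : Set (κ → R)) : M.mulVec '' (c • S) = c • M.mulVec '' S :=
  image_smul_set M.mulVecLin c S

namespace RPIScaling

section Reachable

variable {n m : ℕ} (A : Matrix (Fin n) (Fin n) ℝ) (E : Matrix (Fin n) (Fin m) ℝ)
  {D : Set (Fin m → ℝ)}

theorem Rseq_eq_smul (α : ℝ) (j : ℕ) : Rseq A E D α j = α • Rseq A E D 1 j := by
  induction j with
  | zero => simp [Rseq]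
  | succ j ih =>
    rw [Rseq, Rseq, ih, one_smul, image_mulVec_smul, image_mulVec_smul, smul_add]

theorem zero_mem_Rseq (hD : (0 : Fin m → ℝ) ∈ D) (α : ℝ) (j : ℕ) :
    (0 : Fin n → ℝ) ∈ Rseq A E D α j := by
  induction j with
  | zero => rfl
  | succ j ih =>
    simpa [Rseq] using add_mem_add (mem_image_of_mem A.mulVec ih)
      (mem_image_of_mem E.mulVec (zero_mem_smul_set hD : (0 : Fin m → ℝ) ∈ α • D))

theorem Rseq_mono (hD : (0 : Fin m → ℝ) ∈ D) (α : ℝ) : Monotone (Rseq A E D α) := by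
  refine monotone_nat_of_le_succ fun j => ?_
  induction j with
  | zero =>
    rintro _ rfl
    exact zero_mem_Rseq A E hD α 1
  | succ j ih => exact add_subset_add (image_mono ih) subset_rfl

theorem Rseq_add (α : ℝ) (a b : ℕ) :
    Rseq A E D α (a + b) = (A ^ b).mulVec '' Rseq A E D α a + Rseq A E D α b := by
  induction b with
  | zero => simp [Rseq]
  | succ b ih =>
    rw [← add_assoc, Rseq, ih, image_mulVec_add, image_image, Rseq, add_assoc]
    simp only [mulVec_mulVec, ← pow_succ']

theorem convex_Rseq (hD : Convex ℝ D) (α : ℝ) (j : ℕ) : Convex ℝ (Rseq A E D α j) := by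
  induction j with
  | zero => exact convex_singleton 0
  | succ j ih => exact (ih.linear_image A.mulVecLin).add ((hD.smul α).linear_image E.mulVecLin)

theorem Rseq_mul_eq_geom_sum_smul (hD0 : (0 : Fin m → ℝ) ∈ D) (hDc : Convex ℝ D) {η : ℝ}
    (hη0 : 0 ≤ η) {k : ℕ} (hAk : A ^ k = η • (1 : Matrix (Fin n) (Fin n) ℝ)) (t : ℕ) :
    Rseq A E D 1 (t * k) = (∑ i ∈ Finset.range t, η ^ i) • Rseq A E D 1 k := by
  induction t with
  | zero => simp [Rseq, zero_smul_set ⟨0, zero_mem_Rseq A E hD0 1 k⟩, Set.singleton_zero]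
  | succ t ih =>
    have hpow : (A ^ k).mulVec = fun x => η • x := by
      funext x
      rw [hAk, smul_mulVec, one_mulVec]
    rw [Nat.succ_mul, Rseq_add, ih, hpow, image_smul, smul_smul, geom_sum_succ,
      (convex_Rseq A E hDc 1 k).add_smul (by positivity) zero_le_one, one_smul]

theorem Rinf_eq_iUnion_Rseq_mul (hD : (0 : Fin m → ℝ) ∈ D) (α : ℝ) {k : ℕ} (hk : 1 ≤ k) :
    Rinf A E D α = ⋃ t, Rseq A E D α (t * k) :=
  ((Rseq_mono A E hD α).iUnion_comp_tendsto_atTop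
    (tendsto_atTop_mono (fun t => Nat.le_mul_of_pos_right t hk) tendsto_id)).symm

theorem Rinf_subset_iff_of_pow_eq_smul_one {X : Set (Fin n → ℝ)} (hXc : IsClosed X)
    (hXs : StarConvex ℝ 0 X) (hD0 : (0 : Fin m → ℝ) ∈ D) (hDc : Convex ℝ D) {η : ℝ}
    (hη0 : 0 ≤ η) (hη1 : η < 1) {k : ℕ} (hk : 1 ≤ k)
    (hAk : A ^ k = η • (1 : Matrix (Fin n) (Fin n) ℝ)) {α : ℝ} (hα : 0 ≤ α) :
    Rinf A E D α ⊆ X ↔ (α / (1 - η)) • Rseq A E D 1 k ⊆ X := by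
  have hRseq (t : ℕ) :
      Rseq A E D α (t * k) = (α * ∑ i ∈ Finset.range t, η ^ i) • Rseq A E D 1 k := by
    rw [Rseq_eq_smul, Rseq_mul_eq_geom_sum_smul A E hD0 hDc hη0 hAk, smul_smul]
  rw [Rinf_eq_iUnion_Rseq_mul A E hD0 α hk, iUnion_subset_iff, div_eq_mul_inv]
  simp_rw [hRseq]
  exact forall_smul_set_subset_iff_of_tendsto hXc hXs (fun t => by positivity)
    (fun t => mul_le_mul_of_nonneg_left (geom_sum_le_inv_one_sub hη0 hη1 t) hα)
    ((hasSum_geometric_of_lt_one hη0 hη1).tendsto_sum_nat.const_mul α)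

end Reachable

theorem alphaStar_exact_of_pow_eq_smul_one_general {n m r : ℕ} (hrn : r ≤ n)
    (A : Matrix (Fin n) (Fin n) ℝ) (E : Matrix (Fin n) (Fin m) ℝ)
    (X : Set (Fin n → ℝ)) (D : Set (Fin m → ℝ))
    (hA1 : Assumption1 hrn A E X D)
    (η : ℝ) (hη0 : 0 ≤ η) (hη1 : η < 1) (k : ℕ) (hk : 1 ≤ k)
    (hAk : A ^ k = η • (1 : Matrix (Fin n) (Fin n) ℝ)) :
    alphaStar A E X D = (1 - η) * sSup {α : ℝ | 0 < α ∧ α • Rseq A E D 1 k ⊆ X} := by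
  obtain ⟨hXc, hXk, hX0⟩ := hA1.hX
  obtain ⟨hDc, -, hD0⟩ := hA1.hD
  have hη : 0 < 1 - η := sub_pos.2 hη1
  have hadmissible : {α : ℝ | 0 < α ∧ Rinf A E D α ⊆ X}
      = (1 - η) • {α : ℝ | 0 < α ∧ α • Rseq A E D 1 k ⊆ X} := by
    ext α
    rw [mem_smul_set_iff_inv_smul_mem₀ hη.ne', smul_eq_mul, inv_mul_eq_div]
    simp only [mem_ofPred_eq, div_pos_iff_of_pos_right hη]
    exact and_congr_right fun hα => Rinf_subset_iff_of_pow_eq_smul_one A E hXk.isClosed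
      (hXc.starConvex (interior_subset hX0)) (interior_subset hD0) hDc hη0 hη1 hk hAk hα.le
  rw [alphaStar, hadmissible, Real.sSup_smul_of_nonneg hη.le, smul_eq_mul]

theorem alphaStar_exact_of_pow_eq_smul_one {n m r : ℕ} (hrn : r ≤ n)
    (A : Matrix (Fin n) (Fin n) ℝ) (E : Matrix (Fin n) (Fin m) ℝ)
    (X : Set (Fin n → ℝ)) (D : Set (Fin m → ℝ))
    (hA1 : Assumption1 hrn A E X D) (hA2 : Assumption2 hrn A)
    (η : ℝ) (hη0 : 0 ≤ η) (hη1 : η < 1) (k : ℕ) (hk : 1 ≤ k)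
    (hAk : A ^ k = η • (1 : Matrix (Fin n) (Fin n) ℝ)) :
    alphaStar A E X D = (1 - η) * sSup {α : ℝ | 0 < α ∧ α • Rseq A E D 1 k ⊆ X} :=
  alphaStar_exact_of_pow_eq_smul_one_general hrn A E X D hA1 η hη0 hη1 k hk hAk

end RPIScaling
end
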